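/- Let A, B be n×n symmetric positive definite matrices with A ≼ B and ‖B‖ ≤ c₀‖A‖, and suppose after normalization ‖A‖ = 1 and ‖w‖_A = 1. If ‖(I − B⁻¹A)w‖²_A ≥ 1 − δ for δ ∈ (0,1), then the Euclidean norm and hence the max-norm of Aw are bounded: ‖Aw‖_∞ ≤ ‖Aw‖₂ ≤ √(c₀ δ). -/

import Mathlib

/-!
Write `u = A w`. Since `A ≼ B`, expanding `‖(I - B⁻¹A) w‖²_A` gives at most `‖w‖²_A - uᵀB⁻¹u`,
so the stall hypothesis forces `uᵀB⁻¹u ≤ δ`. Cauchy–Schwarz for the `B`-inner product applied to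
`B⁻¹u` and `u` gives `‖u‖₂⁴ ≤ (uᵀBu)(uᵀB⁻¹u) ≤ c₀ ‖u‖₂² δ`, using `‖B‖ ≤ c₀`.
-/

open Matrix

noncomputable def spec {n : ℕ} (M : Matrix (Fin n) (Fin n) ℝ) : ℝ :=
  ‖Matrix.toEuclideanCLM (𝕜 := ℝ) M‖

namespace Matrix

variable {ι : Type*} [Fintype ι]

lemma sq_apply_le_dotProduct_self (u : ι → ℝ) (i : ι) : u i ^ 2 ≤ u ⬝ᵥ u := by
  simpa only [dotProduct, sq] using
    Finset.single_le_sum (fun j _ ↦ mul_self_nonneg (u j)) (Finset.mem_univ i)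

lemma PosSemidef.dotProduct_mulVec_sq_le {M : Matrix ι ι ℝ} (hM : M.PosSemidef) (x y : ι → ℝ) :
    (x ⬝ᵥ (M *ᵥ y)) ^ 2 ≤ (x ⬝ᵥ (M *ᵥ x)) * (y ⬝ᵥ (M *ᵥ y)) := by
  let _ := M.toSeminormedAddCommGroup hM
  let _ := M.toInnerProductSpace hM
  have inner_eq (a b : ι → ℝ) : inner ℝ a b = a ⬝ᵥ (M *ᵥ b) := dotProduct_comm _ _
  simpa only [inner_eq, sq] using real_inner_mul_inner_self_le x y

lemma IsHermitian.dotProduct_mulVec_comm {M : Matrix ι ι ℝ} (hM : M.IsHermitian) (x y : ι → ℝ) :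
    x ⬝ᵥ (M *ᵥ y) = y ⬝ᵥ (M *ᵥ x) := by
  rw [dotProduct_mulVec, ← mulVec_transpose, ← conjTranspose_eq_transpose_of_trivial, hM.eq,
    dotProduct_comm]

variable [DecidableEq ι]

lemma mulVec_nonsing_inv_mulVec {B : Matrix ι ι ℝ} (hB : IsUnit B) (u : ι → ℝ) :
    B *ᵥ (B⁻¹ *ᵥ u) = u := by
  rw [mulVec_mulVec, mul_nonsing_inv B (B.isUnit_iff_isUnit_det.mp hB), one_mulVec]

lemma PosDef.dotProduct_self_sq_le {B : Matrix ι ι ℝ} (hB : B.PosDef) (u : ι → ℝ) :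
    (u ⬝ᵥ u) ^ 2 ≤ (u ⬝ᵥ (B *ᵥ u)) * (u ⬝ᵥ (B⁻¹ *ᵥ u)) := by
  have := hB.posSemidef.dotProduct_mulVec_sq_le u (B⁻¹ *ᵥ u)
  rwa [mulVec_nonsing_inv_mulVec hB.isUnit, dotProduct_comm (B⁻¹ *ᵥ u)] at this

lemma quadForm_one_sub_inv_mul_mulVec_le {A B : Matrix ι ι ℝ} (hA : A.IsHermitian)
    (hB : IsUnit B) (hBA : (B - A).PosSemidef) (w : ι → ℝ) :
    ((1 - B⁻¹ * A) *ᵥ w) ⬝ᵥ (A *ᵥ ((1 - B⁻¹ * A) *ᵥ w))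
      ≤ w ⬝ᵥ (A *ᵥ w) - (A *ᵥ w) ⬝ᵥ (B⁻¹ *ᵥ (A *ᵥ w)) := by
  set y := B⁻¹ *ᵥ (A *ᵥ w)
  have hAB : y ⬝ᵥ (A *ᵥ y) ≤ y ⬝ᵥ (B *ᵥ y) := by
    have := hBA.dotProduct_mulVec_nonneg y
    rw [star_trivial, sub_mulVec, dotProduct_sub] at this
    linarith
  have hsplit : (1 - B⁻¹ * A) *ᵥ w = w - y := by
    rw [sub_mulVec, one_mulVec, ← mulVec_mulVec]
  rw [hsplit, mulVec_sub, dotProduct_sub, sub_dotProduct, sub_dotProduct,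
    hA.dotProduct_mulVec_comm w y, dotProduct_comm (A *ᵥ w)]
  rw [mulVec_nonsing_inv_mulVec hB] at hAB
  linarith

end Matrix

lemma dotProduct_mulVec_le_spec_mul {n : ℕ} (M : Matrix (Fin n) (Fin n) ℝ) (x : Fin n → ℝ) :
    x ⬝ᵥ (M *ᵥ x) ≤ spec M * (x ⬝ᵥ x) := by
  let v : EuclideanSpace ℝ (Fin n) := WithLp.toLp 2 x
  calc x ⬝ᵥ (M *ᵥ x) = inner ℝ v (toEuclideanCLM (𝕜 := ℝ) M v) := (inner_toEuclideanCLM M v v).symm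
    _ ≤ ‖v‖ * ‖toEuclideanCLM (𝕜 := ℝ) M v‖ := real_inner_le_norm _ _
    _ ≤ ‖v‖ * (spec M * ‖v‖) := by gcongr; exact (toEuclideanCLM (𝕜 := ℝ) M).le_opNorm v
    _ = spec M * (x ⬝ᵥ x) := by
      rw [mul_left_comm, ← real_inner_self_eq_norm_mul_norm, EuclideanSpace.inner_toLp_toLp,
        star_trivial]

theorem near_null_componentwise_general {n : ℕ} (A B : Matrix (Fin n) (Fin n) ℝ)
    (hA : A.PosDef) (hB : B.PosDef) (hBA : (B - A).PosSemidef)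
    (c₀ : ℝ) (hnorm : spec B ≤ c₀ * spec A)
    (hAnorm : spec A = 1)
    (w : Fin n → ℝ) (hwnorm : w ⬝ᵥ (A *ᵥ w) = 1)
    (δ : ℝ)
    (hstall : 1 - δ ≤ ((1 - B⁻¹ * A) *ᵥ w) ⬝ᵥ (A *ᵥ ((1 - B⁻¹ * A) *ᵥ w))) :
    (∀ i, |(A *ᵥ w) i| ≤ Real.sqrt ((A *ᵥ w) ⬝ᵥ (A *ᵥ w))) ∧
    Real.sqrt ((A *ᵥ w) ⬝ᵥ (A *ᵥ w)) ≤ Real.sqrt (c₀ * δ) := by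
  set u := A *ᵥ w
  refine ⟨fun i ↦ Real.abs_le_sqrt (sq_apply_le_dotProduct_self u i), Real.sqrt_le_sqrt ?_⟩
  have hc₀ : spec B ≤ c₀ := by rwa [hAnorm, mul_one] at hnorm
  have hc₀_nonneg : 0 ≤ c₀ := (norm_nonneg _).trans hc₀
  have huu : 0 ≤ u ⬝ᵥ u := by simpa using dotProduct_self_star_nonneg u
  have hinv : u ⬝ᵥ (B⁻¹ *ᵥ u) ≤ δ := by
    linarith [quadForm_one_sub_inv_mul_mulVec_le hA.isHermitian hB.isUnit hBA w]
  have hinv_nonneg : 0 ≤ u ⬝ᵥ (B⁻¹ *ᵥ u) := by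
    simpa using hB.inv.posSemidef.dotProduct_mulVec_nonneg u
  have hsq : (u ⬝ᵥ u) ^ 2 ≤ c₀ * δ * (u ⬝ᵥ u) :=
    calc (u ⬝ᵥ u) ^ 2 ≤ (u ⬝ᵥ (B *ᵥ u)) * (u ⬝ᵥ (B⁻¹ *ᵥ u)) := hB.dotProduct_self_sq_le u
      _ ≤ (c₀ * (u ⬝ᵥ u)) * δ := by
        gcongr
        exact (dotProduct_mulVec_le_spec_mul B u).trans (by gcongr)
      _ = c₀ * δ * (u ⬝ᵥ u) := by ring
  nlinarith [mul_nonneg hc₀_nonneg (hinv_nonneg.trans hinv)]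

theorem near_null_componentwise {n : ℕ} (A B : Matrix (Fin n) (Fin n) ℝ)
    (hA : A.PosDef) (hB : B.PosDef) (hBA : (B - A).PosSemidef)
    (c₀ : ℝ) (hnorm : spec B ≤ c₀ * spec A)
    (hAnorm : spec A = 1)
    (w : Fin n → ℝ) (hwnorm : w ⬝ᵥ (A *ᵥ w) = 1)
    (δ : ℝ) (hδ : δ ∈ Set.Ioo (0 : ℝ) 1)
    (hstall : 1 - δ ≤ ((1 - B⁻¹ * A) *ᵥ w) ⬝ᵥ (A *ᵥ ((1 - B⁻¹ * A) *ᵥ w))) :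
    (∀ i, |(A *ᵥ w) i| ≤ Real.sqrt ((A *ᵥ w) ⬝ᵥ (A *ᵥ w))) ∧
    Real.sqrt ((A *ᵥ w) ⬝ᵥ (A *ᵥ w)) ≤ Real.sqrt (c₀ * δ) :=
  near_null_componentwise_general A B hA hB hBA c₀ hnorm hAnorm w hwnorm δ hstall
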